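/- arXiv:1705.01586 — 4 statements merged into one kernel-verified Lean document; each statement's English description precedes it below -/
import Mathlib

section
/- Let H be a group such that the power graph P(H) is isomorphic to the power graph P(ℤ) of the additive group of integers. Then H is isomorphic (as a group) to ℤ; moreover, every graph isomorphism f : P(ℤ) → P(H) is also an isomorphism of directed power graphs, i.e. for all x, y ∈ ℤ there is an arc x → y in the directed power graph of ℤ if and only if there is an arc f(x) → f(y) in the directed power graph of H. -/
/-- The power graph of a group `G`: distinct `x, y` are adjacent iff one is a
nonzero integer power of the other. -/
def powerGraph (G : Type*) [Group G] : SimpleGraph G where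
  Adj x y := x ≠ y ∧ ∃ n : ℤ, n ≠ 0 ∧ (y = x ^ n ∨ x = y ^ n)
  symm := by
    constructor; rintro x y ⟨hxy, n, hn, h⟩
    exact ⟨hxy.symm, n, hn, h.symm⟩
  loopless := by constructor; rintro x ⟨h, -⟩; exact h rfl

/-- There is an arc `x → y` in the directed power graph iff `x ≠ y` and `y` is a
nonzero integer power of `x`. -/
def powArc {G : Type*} [Group G] (x y : G) : Prop :=
  x ≠ y ∧ ∃ n : ℤ, n ≠ 0 ∧ y = x ^ n
/-- The power graph of an additive group `G`: distinct `x, y` are adjacent iff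
one is a nonzero integer multiple of the other. -/
def addPowerGraph (G : Type*) [AddGroup G] : SimpleGraph G where
  Adj x y := x ≠ y ∧ ∃ n : ℤ, n ≠ 0 ∧ (y = n • x ∨ x = n • y)
  symm := by
    constructor; rintro x y ⟨hxy, n, hn, h⟩
    exact ⟨hxy.symm, n, hn, h.symm⟩
  loopless := by constructor; rintro x ⟨h, -⟩; exact h rfl

/-- There is an arc `x → y` in the directed power graph of an additive group iff
`x ≠ y` and `y` is a nonzero integer multiple of `x`. -/
def addPowArc {G : Type*} [AddGroup G] (x y : G) : Prop :=
  x ≠ y ∧ ∃ n : ℤ, n ≠ 0 ∧ y = n • x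

/-!
In `P(ℤ)` the closed neighbourhood `N[x]` of `x ≠ 0` consists of the multiples and the finitely
many divisors of `x`, while `N[0] = {0}`; hence `x ∣ y` iff `N[y] \ N[x]` is finite. This
description is purely graph-theoretic, so every automorphism of `P(ℤ)` preserves divisibility and
with it the arcs `x → y`, which are the pairs with `x ≠ y`, `x ∣ y` and `y ≠ 0`.

If `f : P(ℤ) ≅ P(H)`, the isolated vertex `0` goes to `1`, so `H` is torsion-free, and `f 1` is
adjacent to every other nontrivial element, which forces it to generate `H`. Thus `H ≅ ℤ`, and
transporting `f` along this isomorphism reduces the directed statement to automorphisms of `P(ℤ)`.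
-/

open SimpleGraph Subgroup

namespace SimpleGraph

variable {V W : Type*} {G : SimpleGraph V} {G' : SimpleGraph W}

def closedNeighborSet (G : SimpleGraph V) (v : V) : Set V := insert v (G.neighborSet v)

theorem mem_closedNeighborSet {v w : V} : w ∈ G.closedNeighborSet v ↔ w = v ∨ G.Adj v w :=
  Iff.rfl

theorem Iso.image_closedNeighborSet (f : G ≃g G') (v : V) :
    f '' G.closedNeighborSet v = G'.closedNeighborSet (f v) := by
  ext w
  obtain ⟨u, rfl⟩ := f.surjective w
  simp [mem_closedNeighborSet, f.injective.eq_iff, Iso.map_adj_iff]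

theorem Iso.finite_closedNeighborSet_diff_iff (f : G ≃g G') (v w : V) :
    (G'.closedNeighborSet (f w) \ G'.closedNeighborSet (f v)).Finite ↔
      (G.closedNeighborSet w \ G.closedNeighborSet v).Finite := by
  rw [← Iso.image_closedNeighborSet f, ← Iso.image_closedNeighborSet f,
    ← Set.image_sdiff f.injective, Set.finite_image_iff f.injective.injOn]

end SimpleGraph

section Int

variable {x y z : ℤ}

local notation "N[" x "]" => closedNeighborSet (addPowerGraph ℤ) x

theorem Int.dvd_one_of_dvd_sq_add_one {n : ℤ} (h : n ∣ n ^ 2 + 1) : n ∣ 1 :=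
  (Int.dvd_add_right (dvd_pow_self n two_ne_zero)).mp h

theorem Int.not_sq_add_one_dvd {n : ℤ} (hn : n ≠ 0) : ¬ n ^ 2 + 1 ∣ n := fun h => by
  have := Int.le_of_dvd (abs_pos.mpr hn) ((dvd_abs _ n).mpr h)
  nlinarith [sq_abs n, abs_pos.mpr hn]

theorem Int.exists_ne_zero_zsmul_eq_iff (hxy : x ≠ y) :
    (∃ n : ℤ, n ≠ 0 ∧ y = n • x) ↔ x ∣ y ∧ y ≠ 0 := by
  constructor
  · rintro ⟨n, hn, rfl⟩
    rw [smul_eq_mul] at hxy ⊢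
    refine ⟨dvd_mul_left x n, mul_ne_zero hn ?_⟩
    rintro rfl
    simp at hxy
  · rintro ⟨⟨c, rfl⟩, hy⟩
    exact ⟨c, right_ne_zero_of_mul hy, by rw [smul_eq_mul, mul_comm]⟩

theorem addPowArc_int_iff : addPowArc x y ↔ x ≠ y ∧ x ∣ y ∧ y ≠ 0 :=
  and_congr_right Int.exists_ne_zero_zsmul_eq_iff

theorem addPowerGraph_int_adj_iff :
    (addPowerGraph ℤ).Adj x y ↔ x ≠ y ∧ (x ∣ y ∧ y ≠ 0 ∨ y ∣ x ∧ x ≠ 0) := by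
  refine and_congr_right fun hxy => ?_
  simp only [and_or_left, exists_or]
  exact or_congr (Int.exists_ne_zero_zsmul_eq_iff hxy) (Int.exists_ne_zero_zsmul_eq_iff hxy.symm)

theorem addPowerGraph_int_not_adj_zero : ¬ (addPowerGraph ℤ).Adj 0 z := by
  simp [addPowerGraph_int_adj_iff]

theorem addPowerGraph_int_mem_closedNeighborSet_of_dvd (h : x ∣ z) (hz : z ≠ 0) :
    z ∈ N[x] := by
  rcases eq_or_ne z x with rfl | hzx
  · exact Or.inl rfl
  · exact Or.inr (addPowerGraph_int_adj_iff.mpr ⟨hzx.symm, Or.inl ⟨h, hz⟩⟩)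

theorem addPowerGraph_int_dvd_of_mem_closedNeighborSet (h : z ∈ N[x])
    (hxz : x.natAbs < z.natAbs) : x ∣ z := by
  rcases h with rfl | h
  · exact dvd_rfl
  rcases (addPowerGraph_int_adj_iff.mp h).2 with ⟨hdvd, -⟩ | ⟨hdvd, hx⟩
  · exact hdvd
  · exact absurd (Int.natAbs_le_of_dvd_ne_zero hdvd hx) hxz.not_ge

theorem addPowerGraph_int_dvd_iff_finite_closedNeighborSet_diff :
    x ∣ y ↔ (N[y] \ N[x]).Finite := by
  constructor
  · intro hxy
    refine (Set.finite_Icc (-(y.natAbs : ℤ)) y.natAbs).subset fun z ⟨hzy, hzx⟩ => ?_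
    by_contra hz
    have hlt : y.natAbs < z.natAbs := by simp only [Set.mem_Icc] at hz; omega
    have hxz := hxy.trans (addPowerGraph_int_dvd_of_mem_closedNeighborSet hzy hlt)
    exact hzx (addPowerGraph_int_mem_closedNeighborSet_of_dvd hxz (by omega))
  · intro hfin
    rcases eq_or_ne y 0 with rfl | hy
    · exact dvd_zero x
    have hmul : Function.Injective fun n : ℕ => y * n := fun m n h => by
      simpa [hy] using h
    obtain ⟨B, hB⟩ := (hfin.preimage hmul.injOn).bddAbove
    -- Large multiples of `y` lie in `N[x]` and exceed `x`, so `x` divides two consecutive ones.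
    have hdvd_mul : ∀ n : ℕ, B + x.natAbs < n → x ∣ y * n := fun n hn => by
      have hyn : y * n ≠ 0 := mul_ne_zero hy (by omega)
      have hmem : y * n ∈ N[x] := by
        by_contra h
        have hyn_mem := addPowerGraph_int_mem_closedNeighborSet_of_dvd (dvd_mul_right y n) hyn
        exact absurd (hB ⟨hyn_mem, h⟩) (by omega)
      refine addPowerGraph_int_dvd_of_mem_closedNeighborSet hmem ?_
      rw [Int.natAbs_mul, Int.natAbs_natCast]
      exact lt_of_lt_of_le (by omega) (Nat.le_mul_of_pos_left n (Int.natAbs_pos.mpr hy))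
    have h := Int.dvd_sub (hdvd_mul (B + x.natAbs + 2) (by omega))
      (hdvd_mul (B + x.natAbs + 1) (by omega))
    rwa [Nat.cast_succ _, mul_add_one, add_sub_cancel_left] at h

end Int

section Aut

variable (g : addPowerGraph ℤ ≃g addPowerGraph ℤ) {x y : ℤ}

theorem addPowerGraph_int_iso_self_dvd_iff : g x ∣ g y ↔ x ∣ y := by
  simp only [addPowerGraph_int_dvd_iff_finite_closedNeighborSet_diff,
    Iso.finite_closedNeighborSet_diff_iff g]

theorem addPowerGraph_int_iso_self_map_zero : g 0 = 0 := by
  have h : g (g.symm 0) ∣ g 0 := (addPowerGraph_int_iso_self_dvd_iff g).mpr (dvd_zero _)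
  rwa [g.apply_symm_apply, zero_dvd_iff] at h

theorem addPowerGraph_int_iso_self_addPowArc_iff : addPowArc (g x) (g y) ↔ addPowArc x y := by
  simp only [addPowArc_int_iff, g.injective.ne_iff, addPowerGraph_int_iso_self_dvd_iff,
    (g.injective.eq_iff' (addPowerGraph_int_iso_self_map_zero g)).not]

end Aut

section PowerGraph

variable {G G' : Type*} [Group G] [Group G']

def MulEquiv.powerGraphIso (e : G ≃* G') : powerGraph G ≃g powerGraph G' where
  toEquiv := e.toEquiv
  map_rel_iff' {_ _} := by
    simp only [powerGraph, MulEquiv.toEquiv_eq_coe, EquivLike.coe_coe, ← map_zpow,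
      e.injective.eq_iff, ne_eq]

theorem MulEquiv.powArc_apply_iff (e : G ≃* G') {x y : G} :
    powArc (e x) (e y) ↔ powArc x y := by
  simp only [powArc, ← map_zpow, e.injective.eq_iff, ne_eq]

def powerGraphMultiplicativeIso (A : Type*) [AddGroup A] :
    powerGraph (Multiplicative A) ≃g addPowerGraph A where
  toEquiv := Multiplicative.toAdd
  map_rel_iff' := Iff.rfl

theorem powerGraph_adj_one_iff {w : G} : (powerGraph G).Adj 1 w ↔ w ≠ 1 ∧ IsOfFinOrder w := by
  rw [isOfFinOrder_iff_zpow_eq_one]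
  simp only [powerGraph, one_zpow, ne_comm (a := (1 : G))]
  constructor
  · rintro ⟨hw, n, hn, h | h⟩
    · exact absurd h hw
    · exact ⟨hw, n, hn, h.symm⟩
  · rintro ⟨hw, n, hn, h⟩
    exact ⟨hw, n, hn, Or.inr h.symm⟩

theorem powerGraph_adj_zpow_two {w : G} (hw : w ≠ 1) : (powerGraph G).Adj w (w ^ (2 : ℤ)) := by
  refine ⟨fun h => hw ?_, 2, two_ne_zero, Or.inl rfl⟩
  rwa [zpow_two, left_eq_mul] at h

theorem zpowers_eq_top_of_forall_adj {a : G} (htf : ∀ w : G, w ≠ 1 → ¬ IsOfFinOrder w)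
    (ha : ∀ w : G, w ≠ 1 → w ≠ a → (powerGraph G).Adj a w) : zpowers a = ⊤ := by
  refine eq_top_iff.mpr fun w _ => ?_
  rcases eq_or_ne w 1 with rfl | hw1
  · exact one_mem _
  rcases eq_or_ne w a with rfl | hwa
  · exact mem_zpowers w
  have hinj : Function.Injective (w ^ · : ℤ → G) :=
    injective_zpow_iff_not_isOfFinOrder.mpr (htf w hw1)
  obtain ⟨-, n, hn, rfl | rfl⟩ := ha w hw1 hwa
  · exact zpow_mem (mem_zpowers a) n
  by_cases hn1 : n ∣ 1
  · obtain ⟨c, hc⟩ := hn1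
    exact mem_zpowers_iff.mpr ⟨c, by rw [← zpow_mul, ← hc, zpow_one]⟩
  -- Otherwise `w ^ (n ^ 2 + 1)` is not adjacent to `a = w ^ n`: neither exponent divides the other.
  have hndvd := Int.not_sq_add_one_dvd hn
  have hk1 : w ^ (n ^ 2 + 1) ≠ 1 := fun h =>
    htf w hw1 (isOfFinOrder_iff_zpow_eq_one.mpr ⟨_, by positivity, h⟩)
  have hkn : w ^ (n ^ 2 + 1) ≠ w ^ n := fun h => hndvd (dvd_of_eq (hinj h))
  obtain ⟨-, m, -, h | h⟩ := ha _ hk1 hkn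
  · rw [← zpow_mul] at h
    exact absurd (Int.dvd_one_of_dvd_sq_add_one ⟨m, hinj h⟩) hn1
  · rw [← zpow_mul] at h
    exact absurd ⟨m, hinj h⟩ hndvd

end PowerGraph

section IsoInt

variable {H : Type*} [Group H]

theorem addPowerGraph_int_iso_map_zero (f : addPowerGraph ℤ ≃g powerGraph H) : f 0 = 1 := by
  by_contra h
  obtain ⟨z, hz⟩ := f.surjective (f 0 ^ (2 : ℤ))
  have hadj := powerGraph_adj_zpow_two h
  rw [← hz, Iso.map_adj_iff] at hadj
  exact addPowerGraph_int_not_adj_zero hadj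

theorem addPowerGraph_int_iso_not_isOfFinOrder (f : addPowerGraph ℤ ≃g powerGraph H) {w : H}
    (hw : w ≠ 1) : ¬ IsOfFinOrder w := by
  intro hfin
  obtain ⟨z, rfl⟩ := f.surjective w
  have hadj := powerGraph_adj_one_iff.mpr ⟨hw, hfin⟩
  rw [← addPowerGraph_int_iso_map_zero f, Iso.map_adj_iff] at hadj
  exact addPowerGraph_int_not_adj_zero hadj

theorem addPowerGraph_int_iso_zpowers_eq_top (f : addPowerGraph ℤ ≃g powerGraph H) :
    zpowers (f 1) = ⊤ := by
  refine zpowers_eq_top_of_forall_adj (fun w => addPowerGraph_int_iso_not_isOfFinOrder f)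
    fun w hw1 hwa => ?_
  obtain ⟨z, rfl⟩ := f.surjective w
  rw [Iso.map_adj_iff, addPowerGraph_int_adj_iff]
  refine ⟨fun h => hwa (h ▸ rfl), Or.inl ⟨one_dvd z, fun h => hw1 ?_⟩⟩
  rw [h, addPowerGraph_int_iso_map_zero f]

theorem nonempty_mulEquiv_of_addPowerGraph_int_iso (f : addPowerGraph ℤ ≃g powerGraph H) :
    Nonempty (Multiplicative ℤ ≃* H) :=
  haveI : Infinite H := Infinite.of_injective f f.injective
  ⟨intEquivOfZPowersEqTop (f 1) (addPowerGraph_int_iso_zpowers_eq_top f)⟩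

theorem addPowerGraph_int_iso_powArc_iff (f : addPowerGraph ℤ ≃g powerGraph H) {x y : ℤ} :
    powArc (f x) (f y) ↔ addPowArc x y := by
  obtain ⟨e⟩ := nonempty_mulEquiv_of_addPowerGraph_int_iso f
  let g : addPowerGraph ℤ ≃g addPowerGraph ℤ :=
    (f.trans e.symm.powerGraphIso).trans (powerGraphMultiplicativeIso ℤ)
  calc powArc (f x) (f y)
      ↔ powArc (e.symm (f x)) (e.symm (f y)) := e.symm.powArc_apply_iff.symm
    _ ↔ addPowArc (g x) (g y) := Iff.rfl
    _ ↔ addPowArc x y := addPowerGraph_int_iso_self_addPowArc_iff g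

end IsoInt

/-- If the power graph of a group `H` is isomorphic to the power graph of `ℤ`,
then `H ≅ ℤ`, and moreover every power graph isomorphism `f : P(ℤ) → P(H)` is an
isomorphism of directed power graphs. -/
theorem stmt_0 (H : Type*) [Group H]
    (h : Nonempty (addPowerGraph ℤ ≃g powerGraph H)) :
    Nonempty (H ≃* Multiplicative ℤ) ∧
      ∀ (f : addPowerGraph ℤ ≃g powerGraph H) (x y : ℤ),
        addPowArc x y ↔ powArc (f x) (f y) := by
  obtain ⟨f⟩ := h
  obtain ⟨e⟩ := nonempty_mulEquiv_of_addPowerGraph_int_iso f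
  exact ⟨⟨e.symm⟩, fun f _ _ => (addPowerGraph_int_iso_powArc_iff f).symm⟩
end

section
/- Let A be a unitary subgroup of the additive group ℚ of rationals, i.e. a subgroup with 1 ∈ A. Then there exists x ∈ A such that the in-neighbourhood I_A(x) is infinite if and only if either there exists a prime p such that 1/p^α ∈ A for every natural number α, or the set of primes p with 1/p ∈ A is infinite. -/
/-!
If infinitely many primes `p` have `1/p ∈ A`, or all `1/p^α` lie in `A` for one prime `p`, then the
elements `1/n ∈ A` with `n > 1` form infinitely many in-neighbours of `1`. Otherwise choose, for
each prime `p`, an exponent `f p` with `1/p^(f p) ∉ A`; since `1/m ∈ A` forces `1/d ∈ A` for all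
`d ∣ m`, every such `m` divides `M = ∏ p^(f p)` over the finitely many primes with `1/p ∈ A`.
Bézout gives `1/y.den ∈ A` for `y ∈ A`, so all denominators in `A` are bounded by `M`. An
in-neighbour `y` of `x` satisfies `|y| ≤ |x|`, and there are only finitely many rationals of
bounded size and bounded denominator.
-/

/-- The in-neighbourhood of `x` in the directed power graph of a subgroup `A` of
`ℚ`: elements `y` of `A` with `y ≠ x` and `x` a nonzero integer multiple of `y`. -/
def inSetA (A : AddSubgroup ℚ) (x : ℚ) : Set ℚ :=
  {y : ℚ | y ∈ A ∧ y ≠ x ∧ ∃ n : ℤ, n ≠ 0 ∧ x = n • y}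

theorem Rat.finite_setOf_abs_le_den_le (r : ℚ) (M : ℕ) :
    {y : ℚ | |y| ≤ r ∧ y.den ≤ M}.Finite := by
  set N : ℤ := ⌈r * M⌉
  have hsub : {y : ℚ | |y| ≤ r ∧ y.den ≤ M} ⊆
      (fun y : ℚ => (y.num, y.den)) ⁻¹' (Set.Icc (-N) N ×ˢ Set.Iic M) := by
    rintro y ⟨hyr, hyM⟩
    have hnum : (|y.num| : ℚ) ≤ N := calc
      (|y.num| : ℚ) = |y| * y.den := by
        rw [← Rat.mul_den_eq_num, abs_mul, Nat.abs_cast]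
      _ ≤ r * M := by gcongr; exact (abs_nonneg y).trans hyr
      _ ≤ N := Int.le_ceil _
    exact ⟨abs_le.mp (by exact_mod_cast hnum), hyM⟩
  refine Set.Finite.subset (Set.Finite.preimage ?_ ((Set.finite_Icc _ _).prod (Set.finite_Iic _)))
    hsub
  intro a _ b _ hab
  exact Rat.ext (congrArg Prod.fst hab) (congrArg Prod.snd hab)

section UnitarySubgroup

variable (A : AddSubgroup ℚ)

theorem one_div_den_mem (hA : (1 : ℚ) ∈ A) {y : ℚ} (hy : y ∈ A) :
    (1 : ℚ) / y.den ∈ A := by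
  have hbezout : (1 : ℚ) = y.num * Int.gcdA y.num y.den + y.den * Int.gcdB y.num y.den := by
    have hgcd : Int.gcd y.num y.den = 1 := y.reduced
    exact_mod_cast hgcd ▸ Int.gcd_eq_gcd_ab y.num y.den
  have hden : (y.den : ℚ) ≠ 0 := by exact_mod_cast y.den_nz
  have key : (1 : ℚ) / y.den = Int.gcdA y.num y.den • y + Int.gcdB y.num y.den • (1 : ℚ) := by
    rw [← Rat.mul_den_eq_num] at hbezout
    rw [zsmul_eq_mul, zsmul_eq_mul, mul_one]
    field_simp
    linear_combination hbezout
  rw [key]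
  exact A.add_mem (A.zsmul_mem hy _) (A.zsmul_mem hA _)

theorem one_div_mem_of_dvd {m d : ℕ} (hm : m ≠ 0) (hd : d ∣ m) (h : (1 : ℚ) / m ∈ A) :
    (1 : ℚ) / d ∈ A := by
  obtain ⟨k, rfl⟩ := hd
  have hd0 : (d : ℚ) ≠ 0 := by exact_mod_cast left_ne_zero_of_mul hm
  have hk0 : (k : ℚ) ≠ 0 := by exact_mod_cast right_ne_zero_of_mul hm
  have key : (1 : ℚ) / d = (k : ℤ) • ((1 : ℚ) / (d * k : ℕ)) := by
    rw [zsmul_eq_mul]; push_cast; field_simp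
  rw [key]
  exact A.zsmul_mem h k

theorem dvd_prod_of_one_div_mem {f : ℕ → ℕ} (hf : ∀ p, p.Prime → (1 : ℚ) / p ^ f p ∉ A)
    {P : Finset ℕ} (hP : ∀ p : ℕ, p.Prime → (1 : ℚ) / p ∈ A → p ∈ P)
    {m : ℕ} (hm : m ≠ 0) (h : (1 : ℚ) / m ∈ A) :
    m ∣ ∏ p ∈ P, p ^ f p := by
  rw [Nat.dvd_iff_prime_pow_dvd_dvd]
  intro p k hp hpk
  have hpk_mem : (1 : ℚ) / p ^ k ∈ A := by exact_mod_cast one_div_mem_of_dvd A hm hpk h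
  have hk : k ≤ f p := by
    by_contra! hlt
    refine hf p hp ?_
    exact_mod_cast one_div_mem_of_dvd A (pow_ne_zero _ hp.ne_zero) (pow_dvd_pow p hlt.le)
      (by exact_mod_cast hpk_mem)
  rcases Nat.eq_zero_or_pos k with rfl | hk0
  · exact pow_zero p ▸ one_dvd _
  have hpP : p ∈ P := hP p hp <| one_div_mem_of_dvd A (pow_ne_zero _ hp.ne_zero)
    (dvd_pow_self p hk0.ne') (by exact_mod_cast hpk_mem)
  exact (pow_dvd_pow p hk).trans (Finset.dvd_prod_of_mem (fun q => q ^ f q) hpP)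

theorem abs_le_of_mem_inSetA {x y : ℚ} (hy : y ∈ inSetA A x) : |y| ≤ |x| := by
  obtain ⟨-, -, n, hn, rfl⟩ := hy
  rw [zsmul_eq_mul, abs_mul]
  have hn1 : (1 : ℚ) ≤ |(n : ℚ)| := by exact_mod_cast Int.one_le_abs hn
  nlinarith [abs_nonneg y]

theorem finite_inSetA_of_den_le {M : ℕ} (hM : ∀ y ∈ A, y.den ≤ M) (x : ℚ) :
    (inSetA A x).Finite :=
  (Rat.finite_setOf_abs_le_den_le |x| M).subset fun y hy =>
    ⟨abs_le_of_mem_inSetA A hy, hM y hy.1⟩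

theorem one_div_mem_inSetA_one {n : ℕ} (hn : 1 < n) (h : (1 : ℚ) / n ∈ A) :
    (1 : ℚ) / n ∈ inSetA A 1 := by
  have hn' : (1 : ℚ) < n := by exact_mod_cast hn
  refine ⟨h, (div_lt_one (by positivity)).mpr hn' |>.ne, n, by omega, ?_⟩
  rw [zsmul_eq_mul]
  field_simp
  norm_cast

theorem infinite_inSetA_one {S : Set ℕ} (hS : S.Infinite)
    (h : ∀ n ∈ S, 1 < n ∧ (1 : ℚ) / n ∈ A) : (inSetA A 1).Infinite := by
  have hinj : Function.Injective fun n : ℕ => (1 : ℚ) / n := by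
    intro a b hab
    simpa using hab
  refine (hS.image hinj.injOn).mono ?_
  rintro _ ⟨n, hn, rfl⟩
  exact one_div_mem_inSetA_one A (h n hn).1 (h n hn).2

end UnitarySubgroup

/-- For a unitary subgroup `A` of `ℚ`: some `x ∈ A` has infinite in-neighbourhood
iff either some prime `p` has `1/p^α ∈ A` for all `α`, or infinitely many primes
`p` satisfy `1/p ∈ A`. -/
theorem stmt_16 (A : AddSubgroup ℚ) (hA : (1 : ℚ) ∈ A) :
    (∃ x ∈ A, (inSetA A x).Infinite) ↔
      ((∃ p : ℕ, p.Prime ∧ ∀ α : ℕ, (1 : ℚ) / (p : ℚ) ^ α ∈ A) ∨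
        {p : ℕ | p.Prime ∧ (1 : ℚ) / (p : ℚ) ∈ A}.Infinite) := by
  constructor
  · rintro ⟨x, -, hinf⟩
    by_contra! h
    obtain ⟨hbdd, hfin⟩ := h
    choose! f hf using hbdd
    set M := ∏ p ∈ hfin.toFinset, p ^ f p
    have hM : M ≠ 0 := Finset.prod_ne_zero_iff.mpr fun p hp =>
      pow_ne_zero _ (hfin.mem_toFinset.mp hp).1.ne_zero
    have hden : ∀ y ∈ A, y.den ≤ M := fun y hy =>
      Nat.le_of_dvd (Nat.pos_of_ne_zero hM) <| dvd_prod_of_one_div_mem A hf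
        (fun p hp hpA => hfin.mem_toFinset.mpr ⟨hp, hpA⟩) y.den_nz (one_div_den_mem A hA hy)
    exact hinf (finite_inSetA_of_den_le A hden x)
  · rintro (⟨p, hp, hpow⟩ | hinf)
    · refine ⟨1, hA, infinite_inSetA_one A (S := Set.range fun α => p ^ (α + 1)) ?_ ?_⟩
      · exact Set.infinite_range_of_injective
          ((Nat.pow_right_injective hp.two_le).comp Nat.succ_injective)
      · rintro _ ⟨α, rfl⟩
        exact ⟨Nat.one_lt_pow α.succ_ne_zero hp.one_lt, by exact_mod_cast hpow (α + 1)⟩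
    · exact ⟨1, hA, infinite_inSetA_one A hinf fun p hp => ⟨hp.1.one_lt, hp.2⟩⟩
end

section
/- Let A be a unitary subgroup of the additive group ℚ of rationals, i.e. a subgroup with 1 ∈ A. Then the following are equivalent: (i) there exists x ∈ A such that the in-neighbourhood I_A(x) is infinite; (ii) for every nonzero x ∈ A, the in-neighbourhood I_A(x) is infinite. -/
theorem AddSubgroup.gcd_nsmul_mem {G : Type*} [AddGroup G] {H : AddSubgroup G} {y : G}
    {a b : ℕ} (ha : a • y ∈ H) (hb : b • y ∈ H) : Nat.gcd a b • y ∈ H := by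
  rw [← natCast_zsmul, Nat.gcd_eq_gcd_ab, add_zsmul, mul_zsmul', mul_zsmul', natCast_zsmul,
    natCast_zsmul]
  exact H.add_mem (H.zsmul_mem ha _) (H.zsmul_mem hb _)

theorem inSetA_zero (A : AddSubgroup ℚ) : inSetA A 0 = ∅ := by
  refine Set.eq_empty_of_forall_notMem fun y ⟨_, hy0, n, hn, h⟩ => hy0 ?_
  rw [zsmul_eq_mul] at h
  exact (mul_eq_zero.1 h.symm).resolve_left (Int.cast_ne_zero.2 hn)

theorem inSetA_infinite_iff (A : AddSubgroup ℚ) {x : ℚ} (hx : x ≠ 0) :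
    (inSetA A x).Infinite ↔ {n : ℕ | x / n ∈ A}.Infinite := by
  constructor
  · intro h hfin
    refine h ((hfin.image (fun n : ℕ => x / n)).union
      (hfin.image (fun n : ℕ => -(x / n))) |>.subset ?_)
    rintro y ⟨hy, -, n, hn, rfl⟩
    obtain ⟨k, rfl | rfl⟩ := Int.eq_nat_or_neg n
    · have hk : (k : ℚ) ≠ 0 := by exact_mod_cast hn
      left
      refine ⟨k, ?_, ?_⟩ <;> simp [hk, hy]
    · have hk : (k : ℚ) ≠ 0 := by simpa using hn
      right
      refine ⟨k, ?_, ?_⟩ <;> simp [hk, hy, neg_div]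
  · intro h
    have hinj : Function.Injective (fun n : ℕ => x / n) := fun m n hmn => by
      have := congrArg (x / ·) hmn
      simp only [div_div_cancel₀ hx] at this
      exact_mod_cast this
    refine ((h.sdiff (Set.toFinite {0, 1})).image hinj.injOn).mono ?_
    rintro _ ⟨n, ⟨hn, hn01⟩, rfl⟩
    simp only [Set.mem_insert_iff, Set.mem_singleton_iff, not_or] at hn01
    have hn0 : (n : ℚ) ≠ 0 := by exact_mod_cast hn01.1
    have hn1 : (n : ℚ) ≠ 1 := by exact_mod_cast hn01.2
    refine ⟨hn, ?_, n, by exact_mod_cast hn01.1, ?_⟩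
    · rw [Ne, div_eq_iff hn0]
      exact fun h => hn1 (mul_left_cancel₀ hx (by linarith))
    · rw [zsmul_eq_mul]; push_cast; field_simp

theorem infinite_div_mem_of_infinite_div_mem (A : AddSubgroup ℚ) {x x' : ℚ} (hx : x ≠ 0)
    (hx' : x' ∈ A) (h : {n : ℕ | x / n ∈ A}.Infinite) : {n : ℕ | x' / n ∈ A}.Infinite := by
  set r := x' / x
  have hr : (r.den : ℚ) * x' = r.num * x := by
    rw [← Rat.mul_den_eq_num r, ← div_mul_cancel₀ x' hx]; ring
  refine Set.infinite_of_forall_exists_gt fun N => ?_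
  obtain ⟨n, hn, hNn⟩ := h.exists_gt (N * r.den)
  have hn0 : n ≠ 0 := by rintro rfl; simp at hNn
  set g := r.den.gcd n
  have hg0 : (g : ℚ) ≠ 0 := by exact_mod_cast Nat.gcd_ne_zero_right hn0
  obtain ⟨m, hm⟩ : g ∣ n := Nat.gcd_dvd_right r.den n
  refine ⟨m, ?_, ?_⟩
  · have hden : r.den • (x' / n) ∈ A := by
      rw [nsmul_eq_mul, ← mul_div_assoc, hr, mul_div_assoc, ← zsmul_eq_mul]
      exact A.zsmul_mem hn _
    have hn : n • (x' / n) ∈ A := by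
      rwa [nsmul_eq_mul, mul_div_cancel₀ _ (by exact_mod_cast hn0)]
    have hgcd : (g : ℚ) * (x' / n) = x' / m := by
      rw [hm, Nat.cast_mul]
      field_simp
    show x' / m ∈ A
    rw [← hgcd, ← nsmul_eq_mul]
    exact AddSubgroup.gcd_nsmul_mem hden hn
  · refine Nat.lt_of_mul_lt_mul_right (a := r.den) (hNn.trans_le ?_)
    rw [hm, mul_comm m]
    exact Nat.mul_le_mul_right _ (Nat.gcd_le_left _ r.pos)

/-- For a unitary subgroup `A` of `ℚ`: some `x ∈ A` has infinite in-neighbourhood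
iff every nonzero `x ∈ A` has infinite in-neighbourhood. -/
theorem stmt_17 (A : AddSubgroup ℚ) (hA : (1 : ℚ) ∈ A) :
    (∃ x ∈ A, (inSetA A x).Infinite) ↔
      (∀ x ∈ A, x ≠ 0 → (inSetA A x).Infinite) := by
  constructor
  · rintro ⟨x₀, -, hinf⟩ x hx hx0
    have hx₀ : x₀ ≠ 0 := by
      rintro rfl
      simp [inSetA_zero] at hinf
    rw [inSetA_infinite_iff A hx₀] at hinf
    exact (inSetA_infinite_iff A hx0).2 (infinite_div_mem_of_infinite_div_mem A hx₀ hx hinf)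
  · exact fun h => ⟨1, hA, h 1 hA one_ne_zero⟩
end

section
/- Let p and q be distinct primes, and for a prime r let G_r = {x ∈ ℚ : r^k · x ∈ ℤ for some natural number k} be the subgroup of the additive group ℚ consisting of rationals whose denominator is a power of r. Define φ : G_p → G_q by φ(0) = 0 and, for x ≠ 0, φ(x) = x · p^(b−a) · q^(a−b), where a is the p-adic valuation of x and b is the q-adic valuation of x (so φ swaps the exponents of p and q in the prime factorization of x). Then φ is a bijection from G_p to G_q, and for all x, y ∈ G_p there is an arc x → y in the directed power graph of G_p if and only if there is an arc φ(x) → φ(y) in the directed power graph of G_q; in particular the directed power graphs of G_p and G_q are isomorphic. -/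
/-- `Gsub r` is the subgroup of `ℚ` consisting of the rationals whose
denominator is a power of `r`, i.e. those `x` with `r^k * x ∈ ℤ` for some `k`. -/
def Gsub (r : ℕ) : AddSubgroup ℚ where
  carrier := {x : ℚ | ∃ k : ℕ, ∃ m : ℤ, (r : ℚ) ^ k * x = (m : ℚ)}
  zero_mem' := ⟨0, 0, by simp⟩
  add_mem' := by
    rintro a b ⟨k, m, hk⟩ ⟨l, n, hl⟩
    refine ⟨k + l, r ^ l * m + r ^ k * n, ?_⟩
    push_cast
    rw [pow_add]
    linear_combination (r : ℚ) ^ l * hk + (r : ℚ) ^ k * hl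
  neg_mem' := by
    rintro a ⟨k, m, hk⟩
    exact ⟨k, -m, by push_cast; linear_combination -hk⟩

/-- The map `φ : G_p → G_q` swapping the exponents of `p` and `q` in the prime
factorization: `φ(0) = 0` and `φ(x) = x * p^(b-a) * q^(a-b)` where `a, b` are the
`p`-adic and `q`-adic valuations of `x`. -/
noncomputable def phiPQ (p q : ℕ) (x : ℚ) : ℚ :=
  if x = 0 then 0
  else x * (p : ℚ) ^ (padicValRat q x - padicValRat p x) *
    (q : ℚ) ^ (padicValRat p x - padicValRat q x)

/-! Valuations are additive, so `φ = phiPQ p q` is multiplicative on all of `ℚ`. Since `φ`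
exchanges the `p`- and `q`-adic valuations, it is an involution, sends `p ^ k` to `q ^ k`, and
sends integers to integers (`p ^ a * q ^ b * w ↦ p ^ b * q ^ a * w`). Hence `p ^ k * x ∈ ℤ` gives
`q ^ k * φ x ∈ ℤ`, and `y = n • x` with `n ≠ 0` gives `φ y = φ n • φ x` with `φ n ≠ 0`; involutivity
turns both implications into equivalences. -/

open Function

theorem addPowArc_map_iff {G H : Type*} [AddGroup G] [AddGroup H] (f : G →+ H)
    (hf : Injective f) (x y : G) : addPowArc (f x) (f y) ↔ addPowArc x y := by
  simp only [addPowArc, hf.ne_iff, ← map_zsmul, hf.eq_iff]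

theorem phiPQ_zero (p q : ℕ) : phiPQ p q 0 = 0 := if_pos rfl

theorem phiPQ_comm (p q : ℕ) : phiPQ p q = phiPQ q p := by
  ext x
  unfold phiPQ
  split_ifs <;> ring

theorem phiPQ_of_ne_zero {p q : ℕ} {x : ℚ} (hx : x ≠ 0) :
    phiPQ p q x = x * (p : ℚ) ^ (padicValRat q x - padicValRat p x) *
      (q : ℚ) ^ (padicValRat p x - padicValRat q x) := if_neg hx

section

variable {p q : ℕ} [hp : Fact p.Prime] [hq : Fact q.Prime]

theorem phiPQ_ne_zero {x : ℚ} (hx : x ≠ 0) : phiPQ p q x ≠ 0 := by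
  rw [phiPQ_of_ne_zero hx]
  exact mul_ne_zero (mul_ne_zero hx (zpow_ne_zero _ (NeZero.ne _))) (zpow_ne_zero _ (NeZero.ne _))

theorem padicValRat_phiPQ_left (hpq : p ≠ q) {x : ℚ} (hx : x ≠ 0) :
    padicValRat p (phiPQ p q x) = padicValRat q x := by
  have hp0 : (p : ℚ) ≠ 0 := NeZero.ne _
  have hq0 : (q : ℚ) ≠ 0 := NeZero.ne _
  rw [phiPQ_of_ne_zero hx, padicValRat.mul (by positivity) (by positivity),
    padicValRat.mul hx (by positivity), padicValRat.zpow, padicValRat.zpow,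
    padicValRat.self hp.out.one_lt, padicValRat.of_nat, padicValNat_primes hpq]
  ring

theorem padicValRat_phiPQ_right (hpq : p ≠ q) {x : ℚ} (hx : x ≠ 0) :
    padicValRat q (phiPQ p q x) = padicValRat p x := by
  rw [phiPQ_comm]
  exact padicValRat_phiPQ_left hpq.symm hx

theorem phiPQ_involutive (hpq : p ≠ q) : Involutive (phiPQ p q) := by
  intro x
  rcases eq_or_ne x 0 with rfl | hx
  · simp only [phiPQ_zero]
  have hp0 : (p : ℚ) ≠ 0 := NeZero.ne _
  have hq0 : (q : ℚ) ≠ 0 := NeZero.ne _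
  rw [phiPQ_of_ne_zero (phiPQ_ne_zero hx), padicValRat_phiPQ_left hpq hx,
    padicValRat_phiPQ_right hpq hx, phiPQ_of_ne_zero hx, ← neg_sub (padicValRat q x),
    zpow_neg, zpow_neg]
  field_simp

theorem phiPQ_mul (x y : ℚ) : phiPQ p q (x * y) = phiPQ p q x * phiPQ p q y := by
  rcases eq_or_ne x 0 with rfl | hx
  · simp only [zero_mul, phiPQ_zero]
  rcases eq_or_ne y 0 with rfl | hy
  · simp only [mul_zero, phiPQ_zero]
  have hp0 : (p : ℚ) ≠ 0 := NeZero.ne _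
  have hq0 : (q : ℚ) ≠ 0 := NeZero.ne _
  simp only [phiPQ_of_ne_zero (mul_ne_zero hx hy), phiPQ_of_ne_zero hx, phiPQ_of_ne_zero hy,
    padicValRat.mul hx hy, zpow_sub₀ hp0, zpow_sub₀ hq0, zpow_add₀ hp0, zpow_add₀ hq0]
  ring

theorem phiPQ_pow_left (hpq : p ≠ q) (k : ℕ) : phiPQ p q ((p : ℚ) ^ k) = (q : ℚ) ^ k := by
  have hp0 : (p : ℚ) ≠ 0 := NeZero.ne _
  rw [phiPQ_of_ne_zero (pow_ne_zero k hp0), padicValRat.pow, padicValRat.pow,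
    padicValRat.self hp.out.one_lt, padicValRat.of_nat, padicValNat_primes hpq.symm]
  simp only [Nat.cast_zero, mul_one, mul_zero, sub_zero, zero_sub, zpow_neg, zpow_natCast]
  field_simp

theorem phiPQ_intCast (hpq : p ≠ q) (n : ℤ) : ∃ m : ℤ, phiPQ p q n = m := by
  rcases eq_or_ne n 0 with rfl | hn
  · exact ⟨0, by simp [phiPQ_zero]⟩
  have hcop : IsCoprime (p : ℤ) q :=
    Nat.isCoprime_iff_coprime.2 ((Nat.coprime_primes hp.out hq.out).2 hpq)
  obtain ⟨w, hw⟩ : (p : ℤ) ^ padicValInt p n * (q : ℤ) ^ padicValInt q n ∣ n :=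
    hcop.pow.mul_dvd (padicValInt_dvd n) (padicValInt_dvd n)
  refine ⟨(p : ℤ) ^ padicValInt q n * (q : ℤ) ^ padicValInt p n * w, ?_⟩
  have hp0 : (p : ℚ) ≠ 0 := NeZero.ne _
  have hq0 : (q : ℚ) ≠ 0 := NeZero.ne _
  rw [phiPQ_of_ne_zero (by exact_mod_cast hn), padicValRat.of_int, padicValRat.of_int,
    zpow_sub₀ hp0, zpow_sub₀ hq0, show (n : ℚ) = _ from congrArg (Int.cast : ℤ → ℚ) hw]
  push_cast
  simp only [zpow_natCast]
  field_simp

theorem mapsTo_phiPQ_Gsub (hpq : p ≠ q) : Set.MapsTo (phiPQ p q) (Gsub p) (Gsub q) := by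
  rintro x ⟨k, m, hkm⟩
  obtain ⟨m', hm'⟩ := phiPQ_intCast hpq m
  exact ⟨k, m', by rw [← phiPQ_pow_left hpq k, ← phiPQ_mul, hkm, hm']⟩

theorem phiPQ_mem_Gsub_iff (hpq : p ≠ q) {x : ℚ} : phiPQ p q x ∈ Gsub q ↔ x ∈ Gsub p := by
  refine ⟨fun hx => ?_, fun hx => mapsTo_phiPQ_Gsub hpq hx⟩
  rw [← phiPQ_involutive hpq x, phiPQ_comm]
  exact mapsTo_phiPQ_Gsub hpq.symm (by rwa [phiPQ_comm])

theorem addPowArc_phiPQ (hpq : p ≠ q) {x y : ℚ} (h : addPowArc x y) :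
    addPowArc (phiPQ p q x) (phiPQ p q y) := by
  obtain ⟨hxy, n, hn, rfl⟩ := h
  obtain ⟨m, hm⟩ := phiPQ_intCast hpq n
  refine ⟨(phiPQ_involutive hpq).injective.ne hxy, m, ?_, ?_⟩
  · rintro rfl
    exact phiPQ_ne_zero (Int.cast_ne_zero.2 hn) (by rw [hm, Int.cast_zero])
  · rw [zsmul_eq_mul, zsmul_eq_mul, phiPQ_mul, hm]

theorem addPowArc_phiPQ_iff (hpq : p ≠ q) (x y : ℚ) :
    addPowArc (phiPQ p q x) (phiPQ p q y) ↔ addPowArc x y := by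
  refine ⟨fun h => ?_, addPowArc_phiPQ hpq⟩
  simpa only [phiPQ_involutive hpq _] using addPowArc_phiPQ hpq h

end

/-- For distinct primes `p, q`, the map `φ` is a bijection from `G_p` to `G_q`
preserving arcs of the directed power graphs in both directions; in particular
the directed power graphs of `G_p` and `G_q` are isomorphic. -/
theorem stmt_19 (p q : ℕ) (hp : p.Prime) (hq : q.Prime) (hpq : p ≠ q) :
    Set.BijOn (phiPQ p q) (Gsub p : Set ℚ) (Gsub q : Set ℚ) ∧
      (∀ x ∈ Gsub p, ∀ y ∈ Gsub p,
        ((x ≠ y ∧ ∃ n : ℤ, n ≠ 0 ∧ y = n • x) ↔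
          (phiPQ p q x ≠ phiPQ p q y ∧
            ∃ n : ℤ, n ≠ 0 ∧ phiPQ p q y = n • phiPQ p q x))) ∧
      (∃ e : (Gsub p) ≃ (Gsub q),
        ∀ x y : Gsub p, addPowArc x y ↔ addPowArc (e x) (e y)) := by
  have := Fact.mk hp
  have := Fact.mk hq
  have hmem : ∀ x, phiPQ p q x ∈ Gsub q ↔ x ∈ Gsub p := fun _ => phiPQ_mem_Gsub_iff hpq
  refine ⟨(phiPQ_involutive hpq).toPerm.bijOn hmem,
    fun x _ y _ => (addPowArc_phiPQ_iff hpq x y).symm,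
    (phiPQ_involutive hpq).toPerm.subtypeEquiv fun x => (hmem x).symm, fun x y => ?_⟩
  rw [← addPowArc_map_iff (Gsub p).subtype Subtype.val_injective,
    ← addPowArc_map_iff (Gsub q).subtype Subtype.val_injective]
  exact (addPowArc_phiPQ_iff hpq x y).symm
end
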